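/- arXiv:1009.4928 — 3 statements merged into one kernel-verified Lean document; each statement's English description precedes it below -/
import Mathlib

section
/- Let a, b, c, d, m be positive real numbers and let x, y > 0. Then the following identity of (complex-valued) Wilson weights holds: f(x; a+m, b+m, c, d) · f(y; a, b, m + i√x, m − i√x) = f(y; a, b, c+m, d+m) · f(x; m + i√y, m − i√y, c, d). -/
open MeasureTheory Complex Real

/-- The normalizing constant for the Wilson weight:
`K(a,b,c,d) = Γ(a+b+c+d) / (4π Γ(a+b)Γ(a+c)Γ(b+c)Γ(a+d)Γ(b+d)Γ(c+d))`. -/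
noncomputable def wilsonK (a b c d : ℂ) : ℂ :=
  Complex.Gamma (a + b + c + d) /
    (4 * Real.pi * Complex.Gamma (a + b) * Complex.Gamma (a + c) * Complex.Gamma (b + c) *
      Complex.Gamma (a + d) * Complex.Gamma (b + d) * Complex.Gamma (c + d))

/-- The Wilson weight
`f(x;a,b,c,d) = K(a,b,c,d)·[Γ(a+i√x)Γ(a−i√x)Γ(b+i√x)Γ(b−i√x)Γ(c+i√x)Γ(c−i√x)Γ(d+i√x)Γ(d−i√x)]
  /(√x·Γ(2i√x)·Γ(−2i√x))`. -/
noncomputable def wilson (x : ℝ) (a b c d : ℂ) : ℂ :=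
  wilsonK a b c d *
    (Complex.Gamma (a + Complex.I * Real.sqrt x) * Complex.Gamma (a - Complex.I * Real.sqrt x) *
      (Complex.Gamma (b + Complex.I * Real.sqrt x) * Complex.Gamma (b - Complex.I * Real.sqrt x)) *
      (Complex.Gamma (c + Complex.I * Real.sqrt x) * Complex.Gamma (c - Complex.I * Real.sqrt x)) *
      (Complex.Gamma (d + Complex.I * Real.sqrt x) * Complex.Gamma (d - Complex.I * Real.sqrt x))) /
    ((Real.sqrt x : ℂ) * Complex.Gamma (2 * Complex.I * Real.sqrt x) *
      Complex.Gamma (-(2 * Complex.I * Real.sqrt x)))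

lemma gamma_ne_zero_of_re_pos {s : ℂ} (h : 0 < s.re) : Complex.Gamma s ≠ 0 := by
  apply Complex.Gamma_ne_zero
  intro n hn
  rw [hn] at h
  simp at h
  have : (0:ℝ) ≤ (n:ℝ) := n.cast_nonneg
  linarith

lemma gamma_ne_zero_of_im_ne {s : ℂ} (h : s.im ≠ 0) : Complex.Gamma s ≠ 0 := by
  apply Complex.Gamma_ne_zero
  intro n hn
  rw [hn] at h
  simp at h

set_option maxHeartbeats 2000000 in
/-- the key algebraic identity of Wilson weights:
`f(x;a+m,b+m,c,d)·f(y;a,b,m+i√x,m−i√x) = f(y;a,b,c+m,d+m)·f(x;m+i√y,m−i√y,c,d)`. -/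
theorem wilson_weight_identity (a b c d m x y : ℝ)
    (ha : 0 < a) (hb : 0 < b) (hc : 0 < c) (hd : 0 < d) (hm : 0 < m)
    (hx : 0 < x) (hy : 0 < y) :
    wilson x ((a : ℂ) + m) ((b : ℂ) + m) (c : ℂ) (d : ℂ) *
      wilson y (a : ℂ) (b : ℂ) ((m : ℂ) + Complex.I * Real.sqrt x)
        ((m : ℂ) - Complex.I * Real.sqrt x)
    = wilson y (a : ℂ) (b : ℂ) ((c : ℂ) + m) ((d : ℂ) + m) *
        wilson x ((m : ℂ) + Complex.I * Real.sqrt y) ((m : ℂ) - Complex.I * Real.sqrt y)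
          (c : ℂ) (d : ℂ) := by

  unfold wilson wilsonK
  set u := Real.sqrt x with hu_def
  set v := Real.sqrt y with hv_def
  have hu : 0 < u := Real.sqrt_pos.mpr hx
  have hv : 0 < v := Real.sqrt_pos.mpr hy
  have hu' : (u:ℂ) ≠ 0 := by exact_mod_cast hu.ne'
  have hv' : (v:ℂ) ≠ 0 := by exact_mod_cast hv.ne'
  have hpi : (Real.pi:ℂ) ≠ 0 := by exact_mod_cast Real.pi_ne_zero
  have h1 : Complex.Gamma (((a:ℂ)+m) + ((b:ℂ)+m)) ≠ 0 := by
    apply gamma_ne_zero_of_re_pos; simp; positivity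
  have h2 : Complex.Gamma (((a:ℂ)+m) + (c:ℂ)) ≠ 0 := by
    apply gamma_ne_zero_of_re_pos; simp; positivity
  have h3 : Complex.Gamma (((b:ℂ)+m) + (c:ℂ)) ≠ 0 := by
    apply gamma_ne_zero_of_re_pos; simp; positivity
  have h4 : Complex.Gamma (((a:ℂ)+m) + (d:ℂ)) ≠ 0 := by
    apply gamma_ne_zero_of_re_pos; simp; positivity
  have h5 : Complex.Gamma (((b:ℂ)+m) + (d:ℂ)) ≠ 0 := by
    apply gamma_ne_zero_of_re_pos; simp; positivity
  have h6 : Complex.Gamma ((c:ℂ) + (d:ℂ)) ≠ 0 := by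
    apply gamma_ne_zero_of_re_pos; simp; positivity
  have h7 : Complex.Gamma ((a:ℂ) + (b:ℂ)) ≠ 0 := by
    apply gamma_ne_zero_of_re_pos; simp; positivity
  have h8 : Complex.Gamma ((a:ℂ) + ((m:ℂ) + Complex.I * (u:ℝ))) ≠ 0 := by
    apply gamma_ne_zero_of_re_pos; simp; positivity
  have h9 : Complex.Gamma ((b:ℂ) + ((m:ℂ) + Complex.I * (u:ℝ))) ≠ 0 := by
    apply gamma_ne_zero_of_re_pos; simp; positivity
  have h10 : Complex.Gamma ((a:ℂ) + ((m:ℂ) - Complex.I * (u:ℝ))) ≠ 0 := by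
    apply gamma_ne_zero_of_re_pos; simp; positivity
  have h11 : Complex.Gamma ((b:ℂ) + ((m:ℂ) - Complex.I * (u:ℝ))) ≠ 0 := by
    apply gamma_ne_zero_of_re_pos; simp; positivity
  have h12 : Complex.Gamma (((m:ℂ) + Complex.I * (u:ℝ)) + ((m:ℂ) - Complex.I * (u:ℝ))) ≠ 0 := by
    apply gamma_ne_zero_of_re_pos; simp; positivity
  have h13 : Complex.Gamma ((a:ℂ) + ((c:ℂ)+m)) ≠ 0 := by
    apply gamma_ne_zero_of_re_pos; simp; positivity
  have h14 : Complex.Gamma ((b:ℂ) + ((c:ℂ)+m)) ≠ 0 := by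
    apply gamma_ne_zero_of_re_pos; simp; positivity
  have h15 : Complex.Gamma ((a:ℂ) + ((d:ℂ)+m)) ≠ 0 := by
    apply gamma_ne_zero_of_re_pos; simp; positivity
  have h16 : Complex.Gamma ((b:ℂ) + ((d:ℂ)+m)) ≠ 0 := by
    apply gamma_ne_zero_of_re_pos; simp; positivity
  have h17 : Complex.Gamma (((c:ℂ)+m) + ((d:ℂ)+m)) ≠ 0 := by
    apply gamma_ne_zero_of_re_pos; simp; positivity
  have h18 : Complex.Gamma (((m:ℂ) + Complex.I * (v:ℝ)) + ((m:ℂ) - Complex.I * (v:ℝ))) ≠ 0 := by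
    apply gamma_ne_zero_of_re_pos; simp; positivity
  have h19 : Complex.Gamma (((m:ℂ) + Complex.I * (v:ℝ)) + (c:ℂ)) ≠ 0 := by
    apply gamma_ne_zero_of_re_pos; simp; positivity
  have h20 : Complex.Gamma (((m:ℂ) - Complex.I * (v:ℝ)) + (c:ℂ)) ≠ 0 := by
    apply gamma_ne_zero_of_re_pos; simp; positivity
  have h21 : Complex.Gamma (((m:ℂ) + Complex.I * (v:ℝ)) + (d:ℂ)) ≠ 0 := by
    apply gamma_ne_zero_of_re_pos; simp; positivity
  have h22 : Complex.Gamma (((m:ℂ) - Complex.I * (v:ℝ)) + (d:ℂ)) ≠ 0 := by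
    apply gamma_ne_zero_of_re_pos; simp; positivity
  have g1 : Complex.Gamma (2 * Complex.I * (u:ℝ)) ≠ 0 := by
    apply gamma_ne_zero_of_im_ne; simp [hu.ne', hv.ne']
  have g2 : Complex.Gamma (-(2 * Complex.I * (u:ℝ))) ≠ 0 := by
    apply gamma_ne_zero_of_im_ne; simp [hu.ne', hv.ne']
  have g3 : Complex.Gamma (2 * Complex.I * (v:ℝ)) ≠ 0 := by
    apply gamma_ne_zero_of_im_ne; simp [hu.ne', hv.ne']
  have g4 : Complex.Gamma (-(2 * Complex.I * (v:ℝ))) ≠ 0 := by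
    apply gamma_ne_zero_of_im_ne; simp [hu.ne', hv.ne']
  have k1 : Complex.Gamma ((a:ℂ) + m + Complex.I * u) ≠ 0 := by
    apply gamma_ne_zero_of_re_pos; simp; positivity
  have k2 : Complex.Gamma ((a:ℂ) + ((m:ℂ) - Complex.I * u)) ≠ 0 := by
    apply gamma_ne_zero_of_re_pos; simp; positivity
  have k3 : Complex.Gamma ((m:ℂ) + b + Complex.I * u) ≠ 0 := by
    apply gamma_ne_zero_of_re_pos; simp; positivity
  have k4 : Complex.Gamma ((m:ℂ) + ((b:ℂ) - Complex.I * u)) ≠ 0 := by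
    apply gamma_ne_zero_of_re_pos; simp; positivity
  have k5 : Complex.Gamma ((a:ℂ) + m * 2 + b) ≠ 0 := by
    apply gamma_ne_zero_of_re_pos; simp; positivity
  have k6 : Complex.Gamma ((m:ℂ) + c + Complex.I * v) ≠ 0 := by
    apply gamma_ne_zero_of_re_pos; simp; positivity
  have k7 : Complex.Gamma ((m:ℂ) + ((c:ℂ) - Complex.I * v)) ≠ 0 := by
    apply gamma_ne_zero_of_re_pos; simp; positivity
  have k8 : Complex.Gamma ((m:ℂ) + d + Complex.I * v) ≠ 0 := by
    apply gamma_ne_zero_of_re_pos; simp; positivity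
  have k9 : Complex.Gamma ((m:ℂ) + ((d:ℂ) - Complex.I * v)) ≠ 0 := by
    apply gamma_ne_zero_of_re_pos; simp; positivity
  have k10 : Complex.Gamma ((m:ℂ) * 2 + c + d) ≠ 0 := by
    apply gamma_ne_zero_of_re_pos; simp; positivity
  have k11 : Complex.Gamma (Complex.I * u * 2) ≠ 0 := by
    apply gamma_ne_zero_of_im_ne; simp [hu.ne', hv.ne']
  have k12 : Complex.Gamma (-(Complex.I * u * 2)) ≠ 0 := by
    apply gamma_ne_zero_of_im_ne; simp [hu.ne', hv.ne']
  have k13 : Complex.Gamma (Complex.I * v * 2) ≠ 0 := by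
    apply gamma_ne_zero_of_im_ne; simp [hu.ne', hv.ne']
  have k14 : Complex.Gamma (-(Complex.I * v * 2)) ≠ 0 := by
    apply gamma_ne_zero_of_im_ne; simp [hu.ne', hv.ne']
  have k15 : Complex.Gamma ((a:ℂ) + m + c) ≠ 0 := by
    apply gamma_ne_zero_of_re_pos; simp; positivity
  have k16 : Complex.Gamma ((m:ℂ) + b + c) ≠ 0 := by
    apply gamma_ne_zero_of_re_pos; simp; positivity
  have k17 : Complex.Gamma ((a:ℂ) + m + d) ≠ 0 := by
    apply gamma_ne_zero_of_re_pos; simp; positivity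
  have k18 : Complex.Gamma ((m:ℂ) + b + d) ≠ 0 := by
    apply gamma_ne_zero_of_re_pos; simp; positivity
  have k19 : Complex.Gamma ((m:ℂ) * 2) ≠ 0 := by
    apply gamma_ne_zero_of_re_pos; simp; positivity
  field_simp
  ring_nf
end

section
/- Let a, b, c, m be positive real numbers and let x, y > 0. Then the identity g(x; a+m, b, c) · g(y; a, m + i√x, m − i√x) = g(y; a, b+m, c+m) · f(x; m + i√y, m − i√y, b, c) holds, where f is the Wilson weight and g the three-parameter weight. -/
open MeasureTheory Complex Real

/-- The three-parameter weight
`g(x;a,b,c) = [Γ(a+i√x)Γ(a−i√x)Γ(b+i√x)Γ(b−i√x)Γ(c+i√x)Γ(c−i√x)]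
  / [4π·Γ(a+b)·Γ(a+c)·Γ(b+c)·√x·Γ(2i√x)·Γ(−2i√x)]`. -/
noncomputable def gweight (x : ℝ) (a b c : ℂ) : ℂ :=
  (Complex.Gamma (a + Complex.I * Real.sqrt x) * Complex.Gamma (a - Complex.I * Real.sqrt x) *
    (Complex.Gamma (b + Complex.I * Real.sqrt x) * Complex.Gamma (b - Complex.I * Real.sqrt x)) *
    (Complex.Gamma (c + Complex.I * Real.sqrt x) * Complex.Gamma (c - Complex.I * Real.sqrt x))) /
  (4 * Real.pi * Complex.Gamma (a + b) * Complex.Gamma (a + c) * Complex.Gamma (b + c) *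
    (Real.sqrt x : ℂ) * Complex.Gamma (2 * Complex.I * Real.sqrt x) *
    Complex.Gamma (-(2 * Complex.I * Real.sqrt x)))

lemma gamma_ne_zero_repos {s : ℂ} (hs : 0 < s.re) : Complex.Gamma s ≠ 0 :=
  Complex.Gamma_ne_zero_of_re_pos hs

set_option maxHeartbeats 1600000 in
/-- the mixed identity
`g(x;a+m,b,c)·g(y;a,m+i√x,m−i√x) = g(y;a,b+m,c+m)·f(x;m+i√y,m−i√y,b,c)`. -/
theorem gweight_wilson_identity (a b c m x y : ℝ)
    (ha : 0 < a) (hb : 0 < b) (hc : 0 < c) (hm : 0 < m) (hx : 0 < x) (hy : 0 < y) :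
    gweight x ((a : ℂ) + m) (b : ℂ) (c : ℂ) *
      gweight y (a : ℂ) ((m : ℂ) + Complex.I * Real.sqrt x)
        ((m : ℂ) - Complex.I * Real.sqrt x)
    = gweight y (a : ℂ) ((b : ℂ) + m) ((c : ℂ) + m) *
        wilson x ((m : ℂ) + Complex.I * Real.sqrt y) ((m : ℂ) - Complex.I * Real.sqrt y)
          (b : ℂ) (c : ℂ) := by
  have hsx : (0:ℝ) < Real.sqrt x := Real.sqrt_pos.2 hx
  have hsy : (0:ℝ) < Real.sqrt y := Real.sqrt_pos.2 hy
  have hsxC : ((Real.sqrt x : ℝ):ℂ) ≠ 0 := by exact_mod_cast hsx.ne'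
  have hsyC : ((Real.sqrt y : ℝ):ℂ) ≠ 0 := by exact_mod_cast hsy.ne'
  have hpi : ((Real.pi : ℝ):ℂ) ≠ 0 := by exact_mod_cast Real.pi_ne_zero
  have him : ∀ s : ℂ, s.im ≠ 0 → Complex.Gamma s ≠ 0 := fun s hs =>
    Complex.Gamma_ne_zero fun n h => hs (by simp [h])
  have G1 : Complex.Gamma (2 * Complex.I * (Real.sqrt x:ℂ)) ≠ 0 := him _ (by simp; positivity)
  have G2 : Complex.Gamma (-(2 * Complex.I * (Real.sqrt x:ℂ))) ≠ 0 := him _ (by simp; positivity)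
  have G3 : Complex.Gamma (2 * Complex.I * (Real.sqrt y:ℂ)) ≠ 0 := him _ (by simp; positivity)
  have G4 : Complex.Gamma (-(2 * Complex.I * (Real.sqrt y:ℂ))) ≠ 0 := him _ (by simp; positivity)
  have G5 : Complex.Gamma ((a:ℂ) + m + b) ≠ 0 := gamma_ne_zero_repos (by simp; positivity)
  have G6 : Complex.Gamma ((a:ℂ) + m + c) ≠ 0 := gamma_ne_zero_repos (by simp; positivity)
  have G7 : Complex.Gamma ((b:ℂ) + c) ≠ 0 := gamma_ne_zero_repos (by simp; positivity)
  have G8 : Complex.Gamma ((a:ℂ) + ((m:ℂ) + Complex.I * Real.sqrt x)) ≠ 0 :=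
    gamma_ne_zero_repos (by simp; positivity)
  have G9 : Complex.Gamma ((a:ℂ) + ((m:ℂ) - Complex.I * Real.sqrt x)) ≠ 0 :=
    gamma_ne_zero_repos (by simp; positivity)
  have G10 : Complex.Gamma (((m:ℂ) + Complex.I * Real.sqrt x) + ((m:ℂ) - Complex.I * Real.sqrt x)) ≠ 0 :=
    gamma_ne_zero_repos (by simp; positivity)
  have G11 : Complex.Gamma ((a:ℂ) + ((b:ℂ) + m)) ≠ 0 := gamma_ne_zero_repos (by simp; positivity)
  have G12 : Complex.Gamma ((a:ℂ) + ((c:ℂ) + m)) ≠ 0 := gamma_ne_zero_repos (by simp; positivity)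
  have G13 : Complex.Gamma (((b:ℂ) + m) + ((c:ℂ) + m)) ≠ 0 := gamma_ne_zero_repos (by simp; positivity)
  have G14 : Complex.Gamma (((m:ℂ) + Complex.I * Real.sqrt y) + ((m:ℂ) - Complex.I * Real.sqrt y)) ≠ 0 :=
    gamma_ne_zero_repos (by simp; positivity)
  have G15 : Complex.Gamma (((m:ℂ) + Complex.I * Real.sqrt y) + b) ≠ 0 :=
    gamma_ne_zero_repos (by simp; positivity)
  have G16 : Complex.Gamma (((m:ℂ) - Complex.I * Real.sqrt y) + b) ≠ 0 :=
    gamma_ne_zero_repos (by simp; positivity)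
  have G17 : Complex.Gamma (((m:ℂ) + Complex.I * Real.sqrt y) + c) ≠ 0 :=
    gamma_ne_zero_repos (by simp; positivity)
  have G18 : Complex.Gamma (((m:ℂ) - Complex.I * Real.sqrt y) + c) ≠ 0 :=
    gamma_ne_zero_repos (by simp; positivity)
  unfold gweight wilson wilsonK
  simp only [div_mul_div_comm, div_mul_eq_mul_div, mul_div_assoc', div_div]
  rw [div_eq_div_iff]
  · ring_nf
  · repeat' apply mul_ne_zero
    all_goals first | assumption | norm_num
  · repeat' apply mul_ne_zero
    all_goals first | assumption | norm_num
end

section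
/- Let a > 0 and −π < β < π be real. Then the function x ↦ Γ(a + ix)·Γ(a − ix)·e^{βx} is integrable on ℝ and ∫_{−∞}^{∞} Γ(a + ix)·Γ(a − ix)·e^{βx} dx = 2π·Γ(2a) / (2·cos(β/2))^{2a}. -/
open MeasureTheory Complex Real Set Filter

noncomputable def mxF (a : ℝ) : ℂ → ℂ := fun z => (2 * Complex.cosh (z / 2)) ^ (-2 * a : ℂ)

lemma mx_base_re (z : ℂ) :
    (2 * Complex.cosh (z / 2)).re = 2 * Real.cosh (z.re / 2) * Real.cos (z.im / 2) := by
  have hz : z / 2 = (↑(z.re / 2) : ℂ) + ↑(z.im / 2) * I := by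
    rw [Complex.ext_iff]; simp
  rw [hz, Complex.cosh_add, Complex.cosh_mul_I, Complex.sinh_mul_I,
    ← Complex.ofReal_cosh, ← Complex.ofReal_sinh, ← Complex.ofReal_cos, ← Complex.ofReal_sin]
  simp only [Complex.mul_re, Complex.add_re, Complex.add_im, Complex.mul_im, Complex.I_re,
    Complex.I_im, Complex.ofReal_re, Complex.ofReal_im, Complex.re_ofNat, Complex.im_ofNat]
  ring

lemma mx_base_re_pos {z : ℂ} (hz : |z.im| < Real.pi) : 0 < (2 * Complex.cosh (z / 2)).re := by
  rw [mx_base_re]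
  have h1 : 0 < Real.cosh (z.re / 2) := Real.cosh_pos _
  have h2 : 0 < Real.cos (z.im / 2) := by
    apply Real.cos_pos_of_mem_Ioo
    constructor <;> [nlinarith [abs_lt.1 hz]; nlinarith [abs_lt.1 hz]]
  positivity

lemma mx_base_ne_zero {z : ℂ} (hz : |z.im| < Real.pi) : 2 * Complex.cosh (z / 2) ≠ 0 := by
  intro h
  have := mx_base_re_pos hz
  rw [h] at this; simp at this

lemma mx_diffAt (a : ℝ) {z : ℂ} (hz : |z.im| < Real.pi) : DifferentiableAt ℂ (mxF a) z := by
  apply DifferentiableAt.cpow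
  · exact (differentiable_const _).mul ((Complex.differentiable_cosh).comp
      (differentiable_id.div_const 2)) |>.differentiableAt
  · exact differentiableAt_const _
  · exact Complex.mem_slitPlane_iff.2 (Or.inl (mx_base_re_pos hz))

lemma mx_norm (a : ℝ) {z : ℂ} (hz : |z.im| < Real.pi) :
    ‖mxF a z‖ = ‖2 * Complex.cosh (z / 2)‖ ^ (-(2 * a)) := by
  rw [mxF]
  rw [show ‖(2 * Complex.cosh (z / 2)) ^ (-2 * a : ℂ)‖
      = ‖(2 * Complex.cosh (z / 2)) ^ (-2 * a : ℂ)‖ from rfl,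
    Complex.norm_cpow_of_ne_zero (mx_base_ne_zero hz)]
  simp [neg_mul]

lemma mx_norm_le (a : ℝ) (ha : 0 < a) {c₀ : ℝ} (hc₀ : c₀ < Real.pi) {z : ℂ}
    (hz : |z.im| ≤ c₀) (hc' : 0 ≤ c₀) :
    ‖mxF a z‖ ≤ (2 * Real.cos (c₀ / 2) * Real.cosh (z.re / 2)) ^ (-(2 * a)) := by
  have hzlt : |z.im| < Real.pi := lt_of_le_of_lt hz hc₀
  rw [mx_norm a hzlt]
  have hcos : 0 < Real.cos (c₀ / 2) := by
    apply Real.cos_pos_of_mem_Ioo; constructor <;> nlinarith [Real.pi_pos]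
  have h1 : 0 < 2 * Real.cos (c₀ / 2) * Real.cosh (z.re / 2) := by
    positivity
  apply Real.rpow_le_rpow_of_nonpos h1 _ (by nlinarith)
  calc 2 * Real.cos (c₀ / 2) * Real.cosh (z.re / 2)
      ≤ 2 * Real.cosh (z.re / 2) * Real.cos (z.im / 2) := by
        have : Real.cos (c₀ / 2) ≤ Real.cos (z.im / 2) := by
          rw [← Real.cos_abs (z.im / 2)]
          apply Real.cos_le_cos_of_nonneg_of_le_pi (abs_nonneg _)
          · nlinarith
          · have h2 : |z.im / 2| = |z.im| / 2 := by rw [abs_div]; norm_num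
            rw [h2]; linarith
        nlinarith [Real.cosh_pos (x := z.re / 2)]
    _ = (2 * Complex.cosh (z / 2)).re := (mx_base_re z).symm
    _ ≤ ‖2 * Complex.cosh (z / 2)‖ := Complex.re_le_norm _

lemma integrable_exp_neg_abs' : Integrable (fun v : ℝ => Real.exp (-|v|)) := by
  rw [← integrableOn_univ, ← Set.Iic_union_Ioi (a := (0:ℝ))]
  apply IntegrableOn.union
  · refine (integrableOn_exp_Iic 0).congr_fun (fun v hv => ?_) measurableSet_Iic
    simp [abs_of_nonpos (Set.mem_Iic.1 hv)]
  · refine (exp_neg_integrableOn_Ioi 0 one_pos).congr_fun (fun v hv => ?_) measurableSet_Ioi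
    simp [abs_of_pos (Set.mem_Ioi.1 hv)]

lemma integrable_exp_neg_mul_abs {b : ℝ} (hb : 0 < b) :
    Integrable (fun v : ℝ => Real.exp (-b * |v|)) := by
  have := integrable_exp_neg_abs'.comp_mul_left' (R := b) hb.ne'
  refine this.congr (Filter.Eventually.of_forall fun v => ?_)
  show Real.exp (-|b * v|) = Real.exp (-b * |v|)
  rw [abs_mul, abs_of_pos hb, neg_mul]

lemma integrable_cosh_rpow {a : ℝ} (ha : 0 < a) :
    Integrable (fun v : ℝ => Real.cosh (v / 2) ^ (-(2 * a))) := by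
  have hcont : Continuous fun v : ℝ => Real.cosh (v / 2) ^ (-(2 * a)) := by
    apply Continuous.rpow_const (Real.continuous_cosh.comp (continuous_id.div_const 2))
    intro v; exact Or.inl (Real.cosh_pos _).ne'
  refine ((integrable_exp_neg_mul_abs ha).const_mul ((2:ℝ) ^ (2 * a))).mono'
    hcont.aestronglyMeasurable (Filter.Eventually.of_forall fun v => ?_)
  rw [Real.norm_eq_abs, abs_of_pos (Real.rpow_pos_of_pos (Real.cosh_pos _) _)]
  have h1 : Real.exp (|v| / 2) / 2 ≤ Real.cosh (v / 2) := by
    rcases abs_cases v with ⟨h, _⟩ | ⟨h, _⟩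
    · rw [h, Real.cosh_eq]
      nlinarith [Real.exp_pos (-(v / 2)), Real.exp_le_exp.2 (le_refl (v/2))]
    · rw [h, Real.cosh_eq]
      have h2 : (-v) / 2 = -(v/2) := by ring
      rw [h2]
      nlinarith [Real.exp_pos (v / 2)]
  calc Real.cosh (v / 2) ^ (-(2 * a)) ≤ (Real.exp (|v| / 2) / 2) ^ (-(2 * a)) :=
        Real.rpow_le_rpow_of_nonpos (by positivity) h1 (by nlinarith)
    _ = (2:ℝ) ^ (2 * a) * Real.exp (-a * |v|) := by
        rw [Real.div_rpow (Real.exp_pos _).le (by norm_num), ← Real.exp_one_rpow (|v|/2),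
          ← Real.rpow_mul (Real.exp_pos 1).le, Real.exp_one_rpow,
          Real.rpow_neg (by norm_num : (0:ℝ) ≤ 2), div_inv_eq_mul, mul_comm]
        congr 1
        ring

lemma contour_shift (f : ℂ → ℂ) (c : ℝ)
    (hd : ∀ z : ℂ, z.im ∈ Set.uIcc 0 c → DifferentiableAt ℂ f z)
    (B : ℝ → ℝ)
    (hB : ∀ T : ℝ, ∀ y ∈ Set.uIcc (0:ℝ) c, ‖f (↑T + ↑y * I)‖ ≤ B T)
    (hBtop : Tendsto B atTop (nhds 0)) (hBbot : Tendsto B atBot (nhds 0))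
    (h0 : Integrable fun x : ℝ => f x)
    (hc : Integrable fun x : ℝ => f (↑x + ↑c * I)) :
    ∫ x : ℝ, f (↑x + ↑c * I) = ∫ x : ℝ, f x := by
  have key : ∀ T : ℝ, (∫ x in -T..T, f (↑x + ↑c * I))
      = (∫ x in -T..T, f ↑x) + (I • ∫ y in (0:ℝ)..c, f (↑T + ↑y * I))
        - I • ∫ y in (0:ℝ)..c, f (↑(-T) + ↑y * I) := by
    intro T
    have H := Complex.integral_boundary_rect_eq_zero_of_differentiableOn f
      (↑(-T)) (↑T + ↑c * I) ?_
    · simp only [Complex.ofReal_re, Complex.ofReal_im, Complex.add_re, Complex.add_im,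
        Complex.mul_re, Complex.mul_im, Complex.I_re, Complex.I_im, Complex.ofReal_neg,
        neg_re, neg_im] at H
      have H' : (∫ x : ℝ in -T..T, f (↑x + 0 * I)) - (∫ x : ℝ in -T..T, f (↑x + ↑c * I)) +
          (I • ∫ y : ℝ in (0:ℝ)..c, f (↑T + ↑y * I)) -
          I • ∫ y : ℝ in (0:ℝ)..c, f (↑(-T) + ↑y * I) = 0 := by
        convert H using 4 <;> first | rfl | simp
      have h00 : (∫ x : ℝ in -T..T, f (↑x + 0 * I)) = ∫ x : ℝ in -T..T, f ↑x := by
        simp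
      rw [h00] at H'
      linear_combination -H'
    · intro z hz
      refine (hd z ?_).differentiableWithinAt
      rw [Complex.mem_reProdIm] at hz
      have := hz.2
      simpa using this
  have lim1 : Tendsto (fun T : ℝ => ∫ x in -T..T, f (↑x + ↑c * I)) atTop
      (nhds (∫ x : ℝ, f (↑x + ↑c * I))) :=
    intervalIntegral_tendsto_integral hc tendsto_neg_atTop_atBot tendsto_id
  have lim2 : Tendsto (fun T : ℝ => ∫ x in -T..T, f ↑x) atTop (nhds (∫ x : ℝ, f ↑x)) :=
    intervalIntegral_tendsto_integral h0 tendsto_neg_atTop_atBot tendsto_id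
  have lim3 : Tendsto (fun T : ℝ => I • ∫ y in (0:ℝ)..c, f (↑T + ↑y * I)) atTop (nhds 0) := by
    rw [tendsto_zero_iff_norm_tendsto_zero]
    apply squeeze_zero (fun T => norm_nonneg _) (fun T => ?_)
      (g := fun T => B T * |c - 0|)
    · simpa using hBtop.mul_const |c - 0|
    · rw [norm_smul]
      have : ‖I‖ = 1 := by simp
      rw [this, one_mul]
      exact intervalIntegral.norm_integral_le_of_norm_le_const
        (fun y hy => hB T y (Set.uIoc_subset_uIcc hy))
  have lim4 : Tendsto (fun T : ℝ => I • ∫ y in (0:ℝ)..c, f (↑(-T) + ↑y * I)) atTop (nhds 0) := by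
    rw [tendsto_zero_iff_norm_tendsto_zero]
    apply squeeze_zero (fun T => norm_nonneg _) (fun T => ?_)
      (g := fun T => B (-T) * |c - 0|)
    · have : Tendsto (fun T : ℝ => B (-T)) atTop (nhds 0) :=
        hBbot.comp tendsto_neg_atTop_atBot
      simpa using this.mul_const |c - 0|
    · rw [norm_smul]
      have hI : ‖I‖ = 1 := by simp
      rw [hI, one_mul]
      exact intervalIntegral.norm_integral_le_of_norm_le_const
        (fun y hy => hB (-T) y (Set.uIoc_subset_uIcc hy))
  have : Tendsto (fun T : ℝ => ∫ x in -T..T, f (↑x + ↑c * I)) atTop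
      (nhds ((∫ x : ℝ, f ↑x) + 0 - 0)) := by
    simp_rw [key]
    exact (lim2.add lim3).sub lim4
  have heq := tendsto_nhds_unique lim1 this
  simpa using heq
lemma mx_line_cont (a : ℝ) {c : ℝ} (hc : |c| < Real.pi) :
    Continuous fun v : ℝ => mxF a (↑v + ↑c * I) := by
  rw [continuous_iff_continuousAt]
  intro v
  have h1 : ContinuousAt (mxF a) (↑v + ↑c * I) := by
    refine (mx_diffAt a ?_).continuousAt
    simpa using hc
  have h2 : ContinuousAt (fun v : ℝ => (↑v + ↑c * I : ℂ)) v :=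
    (Complex.continuous_ofReal.add continuous_const).continuousAt
  exact ContinuousAt.comp (x := v) h1 h2

lemma mx_line_integrable (a : ℝ) (ha : 0 < a) {c : ℝ} (hc : |c| < Real.pi) :
    Integrable fun v : ℝ => mxF a (↑v + ↑c * I) := by
  have hcos : 0 < Real.cos (|c| / 2) := by
    apply Real.cos_pos_of_mem_Ioo
    constructor <;> nlinarith [Real.pi_pos, abs_nonneg c]
  refine ((integrable_cosh_rpow ha).const_mul ((2 * Real.cos (|c| / 2)) ^ (-(2 * a)))).mono'
    (mx_line_cont a hc).aestronglyMeasurable (Filter.Eventually.of_forall fun v => ?_)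
  have h1 : ‖mxF a (↑v + ↑c * I)‖
      ≤ (2 * Real.cos (|c| / 2) * Real.cosh ((↑v + ↑c * I).re / 2)) ^ (-(2 * a)) :=
    mx_norm_le a ha hc (by simp) (abs_nonneg c)
  calc ‖mxF a (↑v + ↑c * I)‖
      ≤ (2 * Real.cos (|c| / 2) * Real.cosh (v / 2)) ^ (-(2 * a)) := by simpa using h1
    _ = (2 * Real.cos (|c| / 2)) ^ (-(2 * a)) * Real.cosh (v / 2) ^ (-(2 * a)) :=
        Real.mul_rpow (by positivity) (Real.cosh_pos _).le

lemma mx_exp_line_integrable (a : ℝ) (ha : 0 < a) (x : ℝ) {c : ℝ} (hc : |c| < Real.pi) :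
    Integrable fun v : ℝ => Complex.exp (I * x * (↑v + ↑c * I)) * mxF a (↑v + ↑c * I) := by
  have hcont : Continuous fun v : ℝ => Complex.exp (I * x * (↑v + ↑c * I)) := by
    apply Complex.continuous_exp.comp
    exact continuous_const.mul (Complex.continuous_ofReal.add continuous_const)
  refine ((mx_line_integrable a ha hc).norm.const_mul (Real.exp (x * c * (-1) + |x * c|))).mono'
    (hcont.mul (mx_line_cont a hc)).aestronglyMeasurable
    (Filter.Eventually.of_forall fun v => ?_)
  rw [norm_mul]
  have h1 : ‖Complex.exp (I * x * (↑v + ↑c * I))‖ = Real.exp (-(x * c)) := by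
    rw [show ‖Complex.exp (I * ↑x * (↑v + ↑c * I))‖
        = ‖Complex.exp (I * ↑x * (↑v + ↑c * I))‖ from rfl, Complex.norm_exp]
    congr 1
    simp [Complex.mul_re, Complex.mul_im]
  rw [h1]
  have h2 : Real.exp (-(x * c)) ≤ Real.exp (x * c * (-1) + |x * c|) := by
    apply Real.exp_le_exp.2
    have := abs_nonneg (x * c)
    linarith
  calc Real.exp (-(x * c)) * ‖mxF a (↑v + ↑c * I)‖
      ≤ Real.exp (x * c * (-1) + |x * c|) * ‖mxF a (↑v + ↑c * I)‖ :=
        mul_le_mul_of_nonneg_right h2 (norm_nonneg _)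
    _ = _ := rfl

lemma cosh_half_tendsto_atTop : Tendsto (fun T : ℝ => Real.cosh (T / 2)) atTop atTop := by
  apply tendsto_atTop_mono (fun T => ?_)
    ((Real.tendsto_exp_atTop.comp (tendsto_id.atTop_div_const two_pos)).atTop_div_const two_pos)
  rw [Real.cosh_eq]
  simp only [Function.comp, id]
  nlinarith [Real.exp_pos (-(T / 2))]

lemma cosh_half_tendsto_atBot : Tendsto (fun T : ℝ => Real.cosh (T / 2)) atBot atTop := by
  apply tendsto_atTop_mono (fun T => ?_)
    ((Real.tendsto_exp_atTop.comp
      (tendsto_neg_atBot_atTop.comp (tendsto_id.atBot_div_const two_pos))).atTop_div_const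
        two_pos)
  rw [Real.cosh_eq]
  simp only [Function.comp, id]
  nlinarith [Real.exp_pos (T / 2), Real.exp_pos (-(T / 2))]

lemma mx_shift (a : ℝ) (ha : 0 < a) (x : ℝ) {c : ℝ} (hc : |c| < Real.pi) :
    ∫ v : ℝ, Complex.exp (I * x * (↑v + ↑c * I)) * mxF a (↑v + ↑c * I)
      = ∫ u : ℝ, Complex.exp (I * x * u) * mxF a u := by
  have hcos : 0 < Real.cos (|c| / 2) := by
    apply Real.cos_pos_of_mem_Ioo
    constructor <;> nlinarith [Real.pi_pos, abs_nonneg c]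
  have habs : ∀ y ∈ Set.uIcc (0:ℝ) c, |y| ≤ |c| := by
    intro y hy
    rcases Set.mem_uIcc.1 hy with ⟨h1, h2⟩ | ⟨h1, h2⟩
    · rw [_root_.abs_of_nonneg h1]; exact le_trans h2 (le_abs_self c)
    · rw [_root_.abs_of_nonpos h2]; exact le_trans (neg_le_neg h1) (neg_le_abs c)
  set B : ℝ → ℝ := fun T =>
    Real.exp (|x| * |c|) * (2 * Real.cos (|c| / 2) * Real.cosh (T / 2)) ^ (-(2 * a)) with hBdef
  have hbound : ∀ T : ℝ, ∀ y ∈ Set.uIcc (0:ℝ) c,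
      ‖Complex.exp (I * x * (↑T + ↑y * I)) * mxF a (↑T + ↑y * I)‖ ≤ B T := by
    intro T y hy
    rw [norm_mul]
    have h1 : ‖Complex.exp (I * x * (↑T + ↑y * I))‖ = Real.exp (-(x * y)) := by
      rw [show ‖Complex.exp (I * ↑x * (↑T + ↑y * I))‖
          = ‖Complex.exp (I * ↑x * (↑T + ↑y * I))‖ from rfl, Complex.norm_exp]
      congr 1
      simp [Complex.mul_re, Complex.mul_im]
    have h2 : ‖mxF a (↑T + ↑y * I)‖
        ≤ (2 * Real.cos (|c| / 2) * Real.cosh (T / 2)) ^ (-(2 * a)) := by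
      have hyc : |(↑T + ↑y * I : ℂ).im| ≤ |c| := by simpa using habs y hy
      have := mx_norm_le a ha hc hyc (abs_nonneg c)
      simpa using this
    have h3 : Real.exp (-(x * y)) ≤ Real.exp (|x| * |c|) := by
      apply Real.exp_le_exp.2
      calc -(x * y) ≤ |x * y| := neg_le_abs _
        _ = |x| * |y| := abs_mul x y
        _ ≤ |x| * |c| := mul_le_mul_of_nonneg_left (habs y hy) (abs_nonneg x)
    rw [h1]
    calc Real.exp (-(x * y)) * ‖mxF a (↑T + ↑y * I)‖
        ≤ Real.exp (|x| * |c|) * (2 * Real.cos (|c| / 2) * Real.cosh (T / 2)) ^ (-(2 * a)) :=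
          mul_le_mul h3 h2 (norm_nonneg _) (Real.exp_pos _).le
      _ = B T := rfl
  have hBlim : ∀ l : Filter ℝ, Tendsto (fun T : ℝ => Real.cosh (T / 2)) l atTop →
      Tendsto B l (nhds 0) := by
    intro l hl
    have h2 : Tendsto (fun T : ℝ => 2 * Real.cos (|c| / 2) * Real.cosh (T / 2)) l atTop :=
      (tendsto_const_mul_atTop_of_pos (by positivity)).2 hl
    have h1 : Tendsto (fun T : ℝ => (2 * Real.cos (|c| / 2) * Real.cosh (T / 2)) ^ (-(2 * a)))
        l (nhds 0) := by
      have := (tendsto_rpow_neg_atTop (show 0 < 2 * a by linarith)).comp h2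
      exact this
    have := h1.const_mul (Real.exp (|x| * |c|))
    simpa using this
  have := contour_shift (fun z => Complex.exp (I * x * z) * mxF a z) c
    (fun z hz => by
      have h1 : |z.im| < Real.pi := lt_of_le_of_lt (habs _ hz) hc
      exact ((differentiableAt_const _).mul differentiableAt_id).cexp.mul (mx_diffAt a h1))
    B hbound (hBlim _ cosh_half_tendsto_atTop) (hBlim _ cosh_half_tendsto_atBot)
    (by
      have := mx_exp_line_integrable a ha x (c := 0) (by simpa using Real.pi_pos)
      refine this.congr (Filter.Eventually.of_forall fun v => ?_)
      norm_num)
    (mx_exp_line_integrable a ha x hc)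
  exact this
lemma mx_sigma_deriv (u : ℝ) :
    HasDerivAt (fun u : ℝ => Real.exp u / (1 + Real.exp u))
      (Real.exp u / (1 + Real.exp u) ^ 2) u := by
  have h1 : 0 < 1 + Real.exp u := by positivity
  have := (Real.hasDerivAt_exp u).div ((hasDerivAt_const u (1:ℝ)).add (Real.hasDerivAt_exp u))
    h1.ne'
  refine this.congr_deriv ?_
  simp only [Pi.add_apply]
  ring

lemma mx_sigma_inj : Function.Injective (fun u : ℝ => Real.exp u / (1 + Real.exp u)) := by
  have h : StrictMono (fun u : ℝ => Real.exp u / (1 + Real.exp u)) := by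
    apply strictMono_of_deriv_pos
    intro u
    rw [(mx_sigma_deriv u).deriv]
    positivity
  exact h.injective

lemma mx_sigma_image :
    (fun u : ℝ => Real.exp u / (1 + Real.exp u)) '' Set.univ = Set.Ioo (0:ℝ) 1 := by
  ext t
  simp only [Set.image_univ, Set.mem_range, Set.mem_Ioo]
  constructor
  · rintro ⟨u, rfl⟩
    have h1 : 0 < Real.exp u := Real.exp_pos u
    have h2 : 0 < 1 + Real.exp u := by positivity
    constructor
    · positivity
    · rw [div_lt_one h2]; linarith
  · rintro ⟨h0, h1⟩
    refine ⟨Real.log (t / (1 - t)), ?_⟩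
    have h2 : 0 < t / (1 - t) := div_pos h0 (by linarith)
    rw [Real.exp_log h2]
    have h3 : (1:ℝ) - t ≠ 0 := by intro h; rw [sub_eq_zero] at h; exact absurd h.symm (ne_of_lt h1)
    have h4 : 1 + t / (1 - t) = 1 / (1 - t) := by field_simp; ring
    rw [h4]
    field_simp

lemma mx_beta_subst (a : ℝ) (ha : 0 < a) (x : ℝ) :
    Complex.betaIntegral (↑a + I * ↑x) (↑a - I * ↑x)
      = ∫ u : ℝ, Complex.exp (I * x * u) * mxF a u := by
  rw [Complex.betaIntegral, intervalIntegral.integral_of_le zero_le_one,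
    MeasureTheory.integral_Ioc_eq_integral_Ioo, ← mx_sigma_image,
    MeasureTheory.integral_image_eq_integral_abs_deriv_smul MeasurableSet.univ
      (fun u _ => (mx_sigma_deriv u).hasDerivWithinAt) mx_sigma_inj.injOn,
    MeasureTheory.setIntegral_univ]
  refine MeasureTheory.integral_congr_ae (Filter.Eventually.of_forall fun u => ?_)
  set E := Real.exp u with hE
  have hE0 : 0 < E := Real.exp_pos u
  set P := 1 + E with hP
  have hP0 : 0 < P := by positivity
  set L := Real.log P with hL
  have hσ : E / P < 1 := by rw [div_lt_one hP0]; linarith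
  have hσ0 : 0 < E / P := by positivity
  -- rewrite the three cpow's as complex exponentials
  have hbase1 : ((E / P : ℝ) : ℂ) ≠ 0 := by
    simp only [ne_eq, Complex.ofReal_eq_zero]; positivity
  have c1 : ((E / P : ℝ) : ℂ) ^ (↑a + I * ↑x - 1)
      = Complex.exp (↑(u - L) * (↑a + I * ↑x - 1)) := by
    rw [Complex.cpow_def_of_ne_zero hbase1, ← Complex.ofReal_log hσ0.le]
    congr 2
    rw [Real.log_div hE0.ne' hP0.ne', hE, Real.log_exp]
  have h1σ : (1 : ℂ) - ↑(E / P : ℝ) = ((1 / P : ℝ) : ℂ) := by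
    rw [show ((1:ℂ) - ↑(E / P : ℝ)) = ((1 - E / P : ℝ) : ℂ) by push_cast; ring]
    congr 1
    rw [hP]
    field_simp
    ring
  have c2 : ((1:ℂ) - ↑(E / P : ℝ)) ^ (↑a - I * ↑x - 1)
      = Complex.exp (↑(-L) * (↑a - I * ↑x - 1)) := by
    rw [h1σ, Complex.cpow_def_of_ne_zero (by simp only [ne_eq, Complex.ofReal_eq_zero]; positivity),
      ← Complex.ofReal_log (by positivity : (0:ℝ) ≤ 1 / P)]
    congr 2
    rw [one_div, Real.log_inv]
  have c3 : mxF a ↑u = Complex.exp (↑(-(u / 2) + L) * (-2 * a)) := by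
    rw [mxF]
    have hb : 2 * Complex.cosh (↑u / 2) = ((2 * Real.cosh (u / 2) : ℝ) : ℂ) := by
      rw [Complex.ofReal_mul, Complex.ofReal_cosh, Complex.ofReal_div]
      norm_num
    have hpos : (0:ℝ) < 2 * Real.cosh (u / 2) := by positivity
    rw [hb, Complex.cpow_def_of_ne_zero (by simp only [ne_eq, Complex.ofReal_eq_zero]; positivity),
      ← Complex.ofReal_log hpos.le]
    congr 2
    have hch : 2 * Real.cosh (u / 2) = Real.exp (-(u / 2)) * P := by
      have h5 : Real.exp (-(u / 2)) * Real.exp u = Real.exp (u / 2) := by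
        rw [← Real.exp_add]; ring_nf
      rw [Real.cosh_eq, hP, hE, mul_add, mul_one, h5]
      ring
    rw [hch, Real.log_mul (Real.exp_pos _).ne' hP0.ne', Real.log_exp]
  have habs : |E / P ^ 2| = E / P ^ 2 := abs_of_pos (by positivity)
  have hsm : (E / P ^ 2 : ℝ) • (Complex.exp (↑(u - L) * (↑a + I * ↑x - 1)) *
      Complex.exp (↑(-L) * (↑a - I * ↑x - 1)))
      = Complex.exp (↑(u - 2 * L)) * (Complex.exp (↑(u - L) * (↑a + I * ↑x - 1)) *
        Complex.exp (↑(-L) * (↑a - I * ↑x - 1))) := by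
    congr 1
    rw [Complex.real_smul]
    have h6 : (E / P ^ 2 : ℝ) = Real.exp (u - 2 * L) := by
      rw [Real.exp_sub, two_mul, Real.exp_add, Real.exp_log hP0, ← hE, sq]
    rw [h6, Complex.ofReal_exp]
  beta_reduce
  rw [habs, c1, c2, c3, hsm, ← Complex.exp_add, ← Complex.exp_add, ← Complex.exp_add]
  congr 1
  push_cast
  ring
lemma mx_beta (a : ℝ) (ha : 0 < a) (x : ℝ) :
    Complex.Gamma (↑a + I * ↑x) * Complex.Gamma (↑a - I * ↑x)
      = Complex.Gamma (2 * ↑a) * ∫ u : ℝ, Complex.exp (I * ↑x * ↑u) * mxF a u := by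
  have h1 : 0 < ((↑a : ℂ) + I * ↑x).re := by simp [ha]
  have h2 : 0 < ((↑a : ℂ) - I * ↑x).re := by simp [ha]
  rw [Complex.Gamma_mul_Gamma_eq_betaIntegral h1 h2, mx_beta_subst a ha x]
  congr 2
  ring

lemma mx_key (a : ℝ) (ha : 0 < a) (x : ℝ) {c : ℝ} (hc : |c| < Real.pi) :
    Complex.Gamma (↑a + I * ↑x) * Complex.Gamma (↑a - I * ↑x) * ↑(Real.exp (c * x))
      = Complex.Gamma (2 * ↑a) * ∫ v : ℝ, Complex.exp (I * ↑x * ↑v) * mxF a (↑v + ↑c * I) := by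
  rw [mx_beta a ha x, ← mx_shift a ha x hc, mul_assoc,
    ← MeasureTheory.integral_mul_const (μ := volume)]
  congr 1
  refine MeasureTheory.integral_congr_ae (Filter.Eventually.of_forall fun v => ?_)
  beta_reduce
  rw [Complex.ofReal_exp, mul_right_comm, ← Complex.exp_add]
  congr 2
  push_cast
  linear_combination (↑x * ↑c : ℂ) * Complex.I_sq

lemma mx_gamma_cont (a : ℝ) (ha : 0 < a) :
    Continuous fun x : ℝ => Complex.Gamma (↑a + I * ↑x) * Complex.Gamma (↑a - I * ↑x) := by
  rw [continuous_iff_continuousAt]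
  intro x
  have hg : ∀ s : ℂ, 0 < s.re → ContinuousAt Complex.Gamma s := by
    intro s hs
    apply (Complex.differentiableAt_Gamma s ?_).continuousAt
    intro m hm
    rw [hm] at hs
    simp only [neg_re, natCast_re] at hs
    have : (0:ℝ) ≤ m := Nat.cast_nonneg m
    linarith
  have c1 : ContinuousAt (fun x : ℝ => Complex.Gamma (↑a + I * ↑x)) x := by
    have h2 : ContinuousAt (fun x : ℝ => ((↑a : ℂ) + I * ↑x)) x := by fun_prop
    exact ContinuousAt.comp (x := x) (hg _ (by simp [ha])) h2
  have c2 : ContinuousAt (fun x : ℝ => Complex.Gamma (↑a - I * ↑x)) x := by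
    have h2 : ContinuousAt (fun x : ℝ => ((↑a : ℂ) - I * ↑x)) x := by fun_prop
    exact ContinuousAt.comp (x := x) (hg _ (by simp [ha])) h2
  exact c1.mul c2
lemma mx_phi_bound (a : ℝ) (ha : 0 < a) (x : ℝ) {c : ℝ} (hc : |c| < Real.pi) (b : ℝ) :
    ‖Complex.Gamma (↑a + I * ↑x) * Complex.Gamma (↑a - I * ↑x) * ↑(Real.exp (b * x))‖
      ≤ ‖Complex.Gamma (2 * ↑a)‖ * (∫ v : ℝ, ‖mxF a (↑v + ↑c * I)‖)
        * Real.exp ((b - c) * x) := by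
  have h1 : ((Real.exp (b * x)) : ℂ) = ↑(Real.exp (c * x)) * ↑(Real.exp ((b - c) * x)) := by
    rw [← Complex.ofReal_mul, ← Real.exp_add]
    ring_nf
  rw [h1, ← mul_assoc, norm_mul, mx_key a ha x hc, norm_mul]
  have h2 : ‖((Real.exp ((b - c) * x)) : ℂ)‖ = Real.exp ((b - c) * x) := by
    rw [Complex.norm_real, Real.norm_eq_abs, abs_of_pos (Real.exp_pos _)]
  rw [h2]
  apply mul_le_mul_of_nonneg_right _ (Real.exp_pos _).le
  apply mul_le_mul_of_nonneg_left _ (norm_nonneg _)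
  calc ‖∫ v : ℝ, Complex.exp (I * ↑x * ↑v) * mxF a (↑v + ↑c * I)‖
      ≤ ∫ v : ℝ, ‖Complex.exp (I * ↑x * ↑v) * mxF a (↑v + ↑c * I)‖ :=
        MeasureTheory.norm_integral_le_integral_norm _
    _ = ∫ v : ℝ, ‖mxF a (↑v + ↑c * I)‖ := by
        refine MeasureTheory.integral_congr_ae (Filter.Eventually.of_forall fun v => ?_)
        beta_reduce
        rw [norm_mul]
        have : ‖Complex.exp (I * ↑x * ↑v)‖ = 1 := by
          rw [show ‖Complex.exp (I * ↑x * ↑v)‖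
              = ‖Complex.exp (I * ↑x * ↑v)‖ from rfl, Complex.norm_exp]
          simp [Complex.mul_re]
        rw [this, one_mul]

lemma mx_phi_integrable (a β : ℝ) (ha : 0 < a) (hβ : |β| < Real.pi) :
    Integrable (fun x : ℝ =>
      Complex.Gamma (↑a + I * ↑x) * Complex.Gamma (↑a - I * ↑x) * ↑(Real.exp (β * x))) := by
  have hβ' := abs_lt.1 hβ
  have hcont : Continuous (fun x : ℝ =>
      Complex.Gamma (↑a + I * ↑x) * Complex.Gamma (↑a - I * ↑x) * ↑(Real.exp (β * x))) := by
    apply (mx_gamma_cont a ha).mul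
    exact Complex.continuous_ofReal.comp (Real.continuous_exp.comp (continuous_const.mul
      continuous_id))
  rw [← integrableOn_univ, ← Set.Iic_union_Ioi (a := (0:ℝ))]
  apply IntegrableOn.union
  · -- x ≤ 0 : use c₂ = (β - π)/2, so β - c₂ = (β + π)/2 > 0
    set c₂ : ℝ := (β - Real.pi) / 2 with hc₂
    set b₂ : ℝ := (β + Real.pi) / 2 with hb₂
    have hb₂pos : 0 < b₂ := by rw [hb₂]; linarith [Real.pi_pos]
    have hc₂abs : |c₂| < Real.pi := by
      rw [abs_lt]; constructor <;> [skip; skip] <;> rw [hc₂] <;> nlinarith [Real.pi_pos]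
    set C₂ : ℝ := ‖Complex.Gamma (2 * (a:ℂ))‖ * (∫ v : ℝ, ‖mxF a (↑v + ↑c₂ * I)‖) with hC₂
    have hC₂0 : 0 ≤ C₂ := by
      rw [hC₂]
      apply mul_nonneg (norm_nonneg _)
      exact MeasureTheory.integral_nonneg fun v => norm_nonneg _
    refine (((integrable_exp_neg_mul_abs hb₂pos).const_mul C₂).integrableOn).mono'
      hcont.aestronglyMeasurable.restrict
      ((MeasureTheory.ae_restrict_iff' measurableSet_Iic).2
        (Filter.Eventually.of_forall fun x hx => ?_))
    have h3 := mx_phi_bound a ha x hc₂abs β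
    have h4 : β - c₂ = b₂ := by rw [hc₂, hb₂]; ring
    rw [h4, ← hC₂] at h3
    refine h3.trans (le_of_eq ?_)
    rw [abs_of_nonpos (Set.mem_Iic.1 hx)]
    ring_nf
  · -- x > 0 : use c₁ = (β + π)/2, so β - c₁ = (β - π)/2 = -b₁ with b₁ > 0
    set c₁ : ℝ := (β + Real.pi) / 2 with hc₁
    set b₁ : ℝ := (Real.pi - β) / 2 with hb₁
    have hb₁pos : 0 < b₁ := by rw [hb₁]; linarith [Real.pi_pos]
    have hc₁abs : |c₁| < Real.pi := by
      rw [abs_lt]; constructor <;> rw [hc₁] <;> nlinarith [Real.pi_pos]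
    set C₁ : ℝ := ‖Complex.Gamma (2 * (a:ℂ))‖ * (∫ v : ℝ, ‖mxF a (↑v + ↑c₁ * I)‖) with hC₁
    refine (((integrable_exp_neg_mul_abs hb₁pos).const_mul C₁).integrableOn).mono'
      hcont.aestronglyMeasurable.restrict
      ((MeasureTheory.ae_restrict_iff' measurableSet_Ioi).2
        (Filter.Eventually.of_forall fun x hx => ?_))
    have h3 := mx_phi_bound a ha x hc₁abs β
    have h4 : β - c₁ = -b₁ := by rw [hc₁, hb₁]; ring
    rw [h4, ← hC₁] at h3
    refine h3.trans (le_of_eq ?_)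
    rw [abs_of_pos (Set.mem_Ioi.1 hx)]

open FourierTransform

/-- Meixner's integral. For real `a > 0` and `−π < β < π`,
`x ↦ Γ(a+ix)·Γ(a−ix)·e^{βx}` is integrable on `ℝ` and
`∫ Γ(a+ix)Γ(a−ix)e^{βx} dx = 2π·Γ(2a)/(2cos(β/2))^{2a}`. -/
theorem meixner_integral (a β : ℝ) (ha : 0 < a) (hβ₁ : -Real.pi < β) (hβ₂ : β < Real.pi) :
    Integrable (fun x : ℝ =>
      Complex.Gamma ((a : ℂ) + Complex.I * x) * Complex.Gamma ((a : ℂ) - Complex.I * x) *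
        (Real.exp (β * x) : ℂ)) ∧
    ∫ x : ℝ,
        Complex.Gamma ((a : ℂ) + Complex.I * x) * Complex.Gamma ((a : ℂ) - Complex.I * x) *
          (Real.exp (β * x) : ℂ)
      = ((2 * Real.pi * Real.Gamma (2 * a) / (2 * Real.cos (β / 2)) ^ (2 * a) : ℝ) : ℂ) := by
  have hβ : |β| < Real.pi := abs_lt.2 ⟨hβ₁, hβ₂⟩
  have hπ : (0:ℝ) < Real.pi := Real.pi_pos
  refine ⟨mx_phi_integrable a β ha hβ, ?_⟩
  set h : ℝ → ℂ := fun v => mxF a (↑v + ↑β * I) with hh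
  -- the Fourier transform of h
  have hFT : ∀ x : ℝ, 𝓕 h (-x / (2 * Real.pi)) = ∫ v : ℝ, Complex.exp (I * ↑x * ↑v) * h v := by
    intro x
    rw [Real.fourier_real_eq_integral_exp_smul]
    refine MeasureTheory.integral_congr_ae (Filter.Eventually.of_forall fun v => ?_)
    beta_reduce
    rw [smul_eq_mul]
    congr 1
    have : -2 * Real.pi * v * (-x / (2 * Real.pi)) = x * v := by
      field_simp
    rw [this]
    push_cast
    ring
  have hkey : ∀ x : ℝ, Complex.Gamma (↑a + I * ↑x) * Complex.Gamma (↑a - I * ↑x)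
      * ↑(Real.exp (β * x)) = Complex.Gamma (2 * ↑a) * 𝓕 h (-x / (2 * Real.pi)) := by
    intro x
    rw [hFT x]
    exact mx_key a ha x hβ
  have hΓne : Complex.Gamma (2 * (a:ℂ)) ≠ 0 := by
    apply Complex.Gamma_ne_zero_of_re_pos
    simp only [Complex.mul_re]
    norm_num [ha]
  -- integrability of 𝓕 h
  have hFh_eq : ∀ w : ℝ, 𝓕 h w = (Complex.Gamma (2 * (a:ℂ)))⁻¹ *
      (Complex.Gamma (↑a + I * ↑(-(2 * Real.pi) * w)) * Complex.Gamma (↑a - I * ↑(-(2 * Real.pi) * w))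
        * ↑(Real.exp (β * (-(2 * Real.pi) * w)))) := by
    intro w
    rw [hkey (-(2 * Real.pi) * w)]
    rw [show -(-(2 * Real.pi) * w) / (2 * Real.pi) = w by field_simp]
    rw [← mul_assoc, inv_mul_cancel₀ hΓne, one_mul]
  have hFh_int : Integrable (𝓕 h) := by
    have h2π : (-(2 * Real.pi) : ℝ) ≠ 0 := neg_ne_zero.2 (by positivity)
    have h0 := (mx_phi_integrable a β ha hβ).comp_mul_left' h2π
    have h1 := h0.const_mul ((Complex.Gamma (2 * (a:ℂ)))⁻¹)
    exact h1.congr (Filter.Eventually.of_forall fun w => (hFh_eq w).symm)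
  have h_int : Integrable h := mx_line_integrable a ha hβ
  have h_cont : Continuous h := mx_line_cont a hβ
  have hinv := h_int.fourierInv_fourier_eq hFh_int (v := 0) h_cont.continuousAt
  have hinv0 : (∫ w : ℝ, 𝓕 h w) = h 0 := by
    rw [← hinv]
    rw [Real.fourierInv_eq]
    simp
  -- compute h 0
  have hcos : 0 < Real.cos (β / 2) := by
    apply Real.cos_pos_of_mem_Ioo
    constructor <;> nlinarith
  have hh0 : h 0 = ((2 * Real.cos (β / 2)) ^ (-(2 * a)) : ℝ) := by
    rw [hh]
    beta_reduce
    rw [show ((0:ℝ):ℂ) + ↑β * I = ↑(β/2) * I * 2 by push_cast; ring]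
    rw [mxF]
    have hbase : 2 * Complex.cosh (↑(β/2) * I * 2 / 2) = ((2 * Real.cos (β / 2) : ℝ) : ℂ) := by
      rw [show (↑(β/2) * I * 2 / 2 : ℂ) = ↑(β/2) * I by ring, Complex.cosh_mul_I,
        ← Complex.ofReal_cos]
      push_cast
      ring
    rw [hbase, Complex.ofReal_cpow (by positivity : (0:ℝ) ≤ 2 * Real.cos (β / 2)) (-(2 * a))]
    congr 1
    push_cast
    ring
  -- main computation
  calc ∫ x : ℝ, Complex.Gamma (↑a + I * ↑x) * Complex.Gamma (↑a - I * ↑x) * ↑(Real.exp (β * x))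
      = ∫ x : ℝ, Complex.Gamma (2 * ↑a) * 𝓕 h ((-(2 * Real.pi)⁻¹) * x) := by
        refine MeasureTheory.integral_congr_ae (Filter.Eventually.of_forall fun x => ?_)
        beta_reduce
        rw [hkey x, show (-(2 * Real.pi)⁻¹) * x = -x / (2 * Real.pi) by field_simp]
    _ = Complex.Gamma (2 * ↑a) * ∫ x : ℝ, 𝓕 h ((-(2 * Real.pi)⁻¹) * x) :=
        MeasureTheory.integral_const_mul _ _
    _ = Complex.Gamma (2 * ↑a) * ((2 * Real.pi) • ∫ w : ℝ, 𝓕 h w) := by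
        rw [MeasureTheory.Measure.integral_comp_mul_left (fun w => 𝓕 h w) (-(2 * Real.pi)⁻¹)]
        congr 1
        rw [show (-(2 * Real.pi)⁻¹)⁻¹ = -(2 * Real.pi) by rw [inv_neg, inv_inv]]
        rw [abs_neg, abs_of_pos (by positivity)]
    _ = ((2 * Real.pi * Real.Gamma (2 * a) / (2 * Real.cos (β / 2)) ^ (2 * a) : ℝ) : ℂ) := by
        rw [hinv0, hh0]
        rw [show (2 * (a:ℂ)) = ((2 * a : ℝ) : ℂ) by push_cast; ring, Complex.Gamma_ofReal]
        rw [real_smul]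
        push_cast
        rw [Real.rpow_neg (by positivity : (0:ℝ) ≤ 2 * Real.cos (β / 2))]
        rw [div_eq_mul_inv]
        push_cast
        ring
end
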